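/- Suppose for some constant α > 0 there are at least 2^{αn²} distinct n-bit threshold functions, and suppose there is an injective map from distinct n-bit threshold functions to vertex-cover equivalence classes of weight functions V(G_n) → ℕ₊ on a fixed graph G_n with 2(n+1) vertices. Then for sufficiently large n, there exists a weight function h on G_n such that no weight function h' : V(G_n) → {1,…,2^{αn/3}} is vertex-cover equivalent to h. -/

import Mathlib

open Finset

def IsVertexCover {V : Type*} (G : SimpleGraph V) (C : Finset V) : Prop :=
  ∀ ⦃u v : V⦄, G.Adj u v → u ∈ C ∨ v ∈ C

def MinimalVC {V : Type*} (G : SimpleGraph V) (C : Finset V) : Prop :=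
  IsVertexCover G C ∧ ∀ C' : Finset V, C' ⊂ C → ¬ IsVertexCover G C'

def VCEquiv {V : Type*} (G : SimpleGraph V) (w w' : V → ℕ) : Prop :=
  ∀ S₁ S₂ : Finset V, MinimalVC G S₁ → MinimalVC G S₂ →
    ((∑ v ∈ S₁, w v ≤ ∑ v ∈ S₂, w v) ↔ (∑ v ∈ S₁, w' v ≤ ∑ v ∈ S₂, w' v))

/-!
If every threshold function were represented by weights in `{1, …, M}` with
`M = ⌊2^{αn/3}⌋`, the injection into vertex-cover equivalence classes would factor through
the `(M + 1)^{2(n+1)}` functions `V(G_n) → {0, …, M}`. That is at most `2^{(αn/3 + 1)·2(n+1)}`,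
whose exponent is eventually smaller than `αn²`, contradicting the lower bound on the
number of threshold functions.
-/

open Filter

namespace VCEquiv

variable {V : Type*} {G : SimpleGraph V} {w₁ w₂ w₃ : V → ℕ}

theorem symm (h : VCEquiv G w₁ w₂) : VCEquiv G w₂ w₁ :=
  fun S₁ S₂ h₁ h₂ => (h S₁ S₂ h₁ h₂).symm

theorem trans (h₁₂ : VCEquiv G w₁ w₂) (h₂₃ : VCEquiv G w₂ w₃) : VCEquiv G w₁ w₃ :=
  fun S₁ S₂ h₁ h₂ => (h₁₂ S₁ S₂ h₁ h₂).trans (h₂₃ S₁ S₂ h₁ h₂)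

end VCEquiv

theorem card_le_of_forall_vcEquiv_le {ι V : Type*} [Fintype V] (G : SimpleGraph V)
    (Φ : ι → V → ℕ) (hΦ : ∀ i j, i ≠ j → ¬ VCEquiv G (Φ i) (Φ j)) (M : ℕ)
    (hM : ∀ i, ∃ w : V → ℕ, (∀ v, w v ≤ M) ∧ VCEquiv G (Φ i) w) :
    Nat.card ι ≤ (M + 1) ^ Fintype.card V := by
  choose w hw_le hw_equiv using hM
  let code : ι → V → Fin (M + 1) := fun i v => ⟨w i v, Nat.lt_succ_of_le (hw_le i v)⟩
  have hcode : Function.Injective code := by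
    intro i j hij
    by_contra hne
    have hw : w i = w j := funext fun v => congrArg Fin.val (congrFun hij v)
    exact hΦ i j hne ((hw_equiv i).trans (hw ▸ (hw_equiv j).symm))
  simpa [Nat.card_fun] using Nat.card_le_card_of_injective code hcode

theorem eventually_exponent_lt {α : ℝ} (hα : 0 < α) :
    ∀ᶠ n : ℕ in atTop, (α * n / 3 + 1) * (2 * (n + 1)) < α * (n : ℝ) ^ 2 := by
  filter_upwards [eventually_gt_atTop ⌈2 + 12 / α⌉₊] with n hn
  have hn' : 2 + 12 / α < n := Nat.lt_of_ceil_lt hn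
  have h12 : 12 < α * (n - 2) := by
    have := mul_lt_mul_of_pos_left hn' hα
    rw [mul_add, mul_div_cancel₀ _ hα.ne'] at this
    linarith
  nlinarith

theorem eventually_floor_add_one_pow_lt {α : ℝ} (hα : 0 < α) :
    ∀ᶠ n : ℕ in atTop,
      ((⌊(2 : ℝ) ^ (α * n / 3)⌋₊ + 1 : ℝ) ^ (2 * (n + 1))) < (2 : ℝ) ^ (α * (n : ℝ) ^ 2) := by
  filter_upwards [eventually_exponent_lt hα] with n hn
  set e := α * n / 3
  have hone : (1 : ℝ) ≤ 2 ^ e := Real.one_le_rpow (by norm_num) (by positivity)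
  have hbase : (⌊(2 : ℝ) ^ e⌋₊ + 1 : ℝ) ≤ 2 ^ (e + 1) := by
    rw [Real.rpow_add two_pos, Real.rpow_one]
    linarith [Nat.floor_le (zero_le_one.trans hone)]
  calc ((⌊(2 : ℝ) ^ e⌋₊ + 1 : ℝ) ^ (2 * (n + 1)))
      ≤ ((2 : ℝ) ^ (e + 1)) ^ (2 * (n + 1)) := by gcongr
    _ = (2 : ℝ) ^ ((e + 1) * (2 * (n + 1))) := by
      rw [← Real.rpow_natCast, ← Real.rpow_mul zero_le_two]
      push_cast
      rfl
    _ < (2 : ℝ) ^ (α * (n : ℝ) ^ 2) := Real.rpow_lt_rpow_of_exponent_lt one_lt_two hn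

/-- If there are at least `2^(αn²)` distinct `n`-bit threshold functions and
they map injectively (up to vertex-cover equivalence) to positive weight functions on a
graph `G_n` with `2(n+1)` vertices, then for all sufficiently large `n` some weight
function on `G_n` has no vertex-cover-equivalent weight function with range
`{1, …, 2^{αn/3}}`. -/
theorem stmt_11 (α : ℝ) (hα : 0 < α)
    (V : ℕ → Type) [∀ n, Fintype (V n)]
    (G : ∀ n, SimpleGraph (V n))
    (hcard : ∀ n, Fintype.card (V n) = 2 * (n + 1))
    (TF : ℕ → Type)
    (hTF : ∀ n : ℕ, (2 : ℝ) ^ (α * (n : ℝ) ^ 2) ≤ (Nat.card (TF n) : ℝ))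
    (Φ : ∀ n, TF n → (V n → ℕ))
    (hΦpos : ∀ n f v, 0 < Φ n f v)
    (hΦ : ∀ n (f g : TF n), f ≠ g → ¬ VCEquiv (G n) (Φ n f) (Φ n g)) :
    ∃ N : ℕ, ∀ n ≥ N, ∃ h : V n → ℕ, (∀ v, 0 < h v) ∧
      ∀ h' : V n → ℕ,
        (∀ v, 0 < h' v ∧ ((h' v : ℝ) ≤ (2 : ℝ) ^ (α * (n : ℝ) / 3))) →
        ¬ VCEquiv (G n) h h' := by
  obtain ⟨N, hN⟩ := eventually_atTop.1 (eventually_floor_add_one_pow_lt hα)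
  refine ⟨N, fun n hn => ?_⟩
  by_contra! hsmall
  have hcount := card_le_of_forall_vcEquiv_le (G n) (Φ n) (hΦ n) ⌊(2 : ℝ) ^ (α * n / 3)⌋₊
    fun f => by
      obtain ⟨h', hh'_le, hh'_equiv⟩ := hsmall (Φ n f) (hΦpos n f)
      exact ⟨h', fun v => Nat.le_floor (hh'_le v).2, hh'_equiv⟩
  rw [hcard] at hcount
  have hcount' : (Nat.card (TF n) : ℝ) ≤ (⌊(2 : ℝ) ^ (α * n / 3)⌋₊ + 1 : ℝ) ^ (2 * (n + 1)) := by
    exact_mod_cast hcount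
  linarith [hTF n, hN n hn]
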